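/- arXiv:2511.07117 — 3 statements merged into one kernel-verified Lean document; each statement's English description precedes it below -/
import Mathlib

section
/- Let φ : ℝ^m → ℝ ∪ {+∞} be a proper, lsc, convex function and γ > 0. Then the horizons of φ and its Moreau envelope φ^γ coincide: hzn φ^γ = hzn φ. -/
open scoped RealInnerProductSpace

noncomputable section

abbrev Eu (m : ℕ) := EuclideanSpace ℝ (Fin m)

def EProper {E : Type*} (φ : E → EReal) : Prop :=
  (∃ x, φ x ≠ ⊤) ∧ ∀ x, φ x ≠ ⊥

def EConvexOn {E : Type*} [AddCommGroup E] [Module ℝ E] (φ : E → EReal) : Prop :=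
  ∀ x y : E, ∀ a b : ℝ, 0 ≤ a → 0 ≤ b → a + b = 1 →
    φ (a • x + b • y) ≤ (a : EReal) * φ x + (b : EReal) * φ y

def edom {E : Type*} (φ : E → EReal) : Set E := {x | φ x ≠ ⊤}

def hzn {E : Type*} [AddCommGroup E] (φ : E → EReal) : Set E :=
  {v | ∀ z ∈ edom φ, φ (z + v) ≤ φ z}

/-- Moreau envelope of `φ` with parameter `γ`. -/
def menv {m : ℕ} (φ : Eu m → EReal) (γ : ℝ) (z : Eu m) : EReal :=
  ⨅ w, φ w + ((1 / (2 * γ) * ‖w - z‖ ^ 2 : ℝ) : EReal)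

/-- The Moreau envelope lies below the function. -/
lemma menv_le_self {m : ℕ} (φ : Eu m → EReal) (γ : ℝ) (z : Eu m) :
    menv φ γ z ≤ φ z := by
  refine iInf_le_of_le z ?_
  simp

/-- The Moreau envelope is everywhere `≠ ⊤` if `φ` is somewhere finite. -/
lemma menv_ne_top {m : ℕ} (φ : Eu m → EReal) (γ : ℝ) {z₀ : Eu m} (h : φ z₀ ≠ ⊤)
    (x : Eu m) : menv φ γ x ≠ ⊤ := by
  refine ne_of_lt (lt_of_le_of_lt (iInf_le _ z₀) ?_)
  exact EReal.add_lt_top h (EReal.coe_ne_top _)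

/-- A lower semicontinuous, nowhere-`⊥` function is bounded below on a closed ball. -/
lemma exists_lb_ball {m : ℕ} {φ : Eu m → EReal} (hbot : ∀ x, φ x ≠ ⊥)
    (hlsc : LowerSemicontinuous φ) (z : Eu m) :
    ∃ M : ℝ, ∀ x ∈ Metric.closedBall z 1, (M : EReal) < φ x := by
  have h1 : ∀ x : Eu m, ∃ r : ℝ, (r : EReal) < φ x := by
    intro x
    obtain ⟨r, _, hr2⟩ := EReal.exists_between_coe_real ((hbot x).bot_lt)
    exact ⟨r, hr2⟩
  choose g hg using h1
  obtain ⟨t, -, hcov⟩ := (isCompact_closedBall z 1).elim_nhds_subcover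
    (fun x => {x' | (g x : EReal) < φ x'}) (fun x _ => hlsc x (g x) (hg x))
  have hne : t.Nonempty := by
    rcases Finset.eq_empty_or_nonempty t with h | h
    · exfalso
      have hz : z ∈ Metric.closedBall z 1 := Metric.mem_closedBall_self zero_le_one
      have := hcov hz
      simp [h] at this
    · exact h
  refine ⟨t.inf' hne g, fun x hx => ?_⟩
  have := hcov hx
  simp only [Set.mem_iUnion, Set.mem_setOf_eq] at this
  obtain ⟨x₀, hx₀t, hx₀⟩ := this
  exact lt_of_le_of_lt (EReal.coe_le_coe_iff.2 (Finset.inf'_le g hx₀t)) hx₀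

set_option maxHeartbeats 2000000 in
/-- The horizons of `φ` and of its Moreau envelope `φ^γ` coincide. -/
theorem hzn_moreau_env {m : ℕ} (φ : Eu m → EReal)
    (hproper : EProper φ) (hlsc : LowerSemicontinuous φ) (hconv : EConvexOn φ)
    (γ : ℝ) (hγ : 0 < γ) :
    hzn (menv φ γ) = hzn φ := by
  obtain ⟨⟨z₀, hz₀⟩, hbot⟩ := hproper
  set c : ℝ := 1 / (2 * γ) with hc_def
  have hc : 0 < c := by positivity
  ext v
  simp only [hzn, Set.mem_setOf_eq]
  constructor
  · -- hard direction: v ∈ hzn (menv φ γ) → v ∈ hzn φ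
    intro hv z hz
    have hz' : φ z ≠ ⊤ := hz
    set a : ℝ := (φ z).toReal with ha_def
    have ha : (a : EReal) = φ z := EReal.coe_toReal hz' (hbot z)
    -- iterate the horizon property of the envelope
    have hall : ∀ x : Eu m, menv φ γ (x + v) ≤ menv φ γ x := by
      intro x
      exact hv x (menv_ne_top φ γ hz₀ x)
    have hiter : ∀ n : ℕ, menv φ γ (z + n • v) ≤ (a : EReal) := by
      intro n
      induction n with
      | zero => simpa [ha] using menv_le_self φ γ z
      | succ n ih =>
        have h1 : z + (n + 1) • v = (z + n • v) + v := by
          rw [succ_nsmul]; abel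
        rw [h1]
        exact le_trans (hall _) ih
    -- lower bound on the unit ball around z
    obtain ⟨M, hM⟩ := exists_lb_ball hbot hlsc z
    -- suffices: every real b < φ (z+v) satisfies b ≤ a
    suffices hsuff : ∀ b : ℝ, (b : EReal) < φ (z + v) → b ≤ a by
      by_contra hcon
      push_neg at hcon
      rw [← ha] at hcon
      obtain ⟨b, hb1, hb2⟩ := EReal.exists_between_coe_real hcon
      exact absurd (hsuff b hb2) (not_le.2 (EReal.coe_lt_coe_iff.1 hb1))
    intro b hb
    -- lower semicontinuity at z + v
    obtain ⟨δ, hδ, hδball⟩ := Metric.eventually_nhds_iff.1 (hlsc (z + v) (b : EReal) hb)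
    set K : ℝ := ‖v‖ + 1 with hK_def
    have hK : 1 ≤ K := by rw [hK_def]; linarith [norm_nonneg v]
    have hK0 : 0 < K := lt_of_lt_of_le one_pos hK
    set C : ℝ := c * δ ^ 2 / (K + δ) with hC_def
    have hC : 0 < C := by
      rw [hC_def]
      have h1 : 0 < c * δ ^ 2 := by positivity
      have h2 : 0 < K + δ := by linarith
      positivity
    have key : ∀ n : ℕ, 1 ≤ n → a + 1 - C * n ≤ M → b < a + 1 / (n : ℝ) ^ 2 := by
      intro n hn hMn
      set ν : ℝ := (n : ℝ) with hν_def
      have hν : 1 ≤ ν := by rw [hν_def]; exact_mod_cast hn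
      have hν0 : 0 < ν := lt_of_lt_of_le one_pos hν
      -- get an approximate minimizer
      have hlt : menv φ γ (z + n • v) < ((a + 1 / ν ^ 2 : ℝ) : EReal) := by
        refine lt_of_le_of_lt (hiter n) ?_
        rw [EReal.coe_lt_coe_iff]
        have : 0 < 1 / ν ^ 2 := by positivity
        linarith
      rw [menv, iInf_lt_iff] at hlt
      obtain ⟨w, hw⟩ := hlt
      set e : Eu m := w - z - ν • v with he_def
      have hwz : w - (z + n • v) = e := by
        rw [he_def, ← Nat.cast_smul_eq_nsmul ℝ n v]
        abel
      set r : ℝ := ‖e‖ with hr_def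
      have hr0 : 0 ≤ r := norm_nonneg _
      -- φ w is finite
      have hwt : φ w ≠ ⊤ := by
        intro htop
        rw [htop, hwz, EReal.top_add_coe] at hw
        exact absurd hw (not_lt.2 le_top)
      set q : ℝ := (φ w).toReal with hq_def
      have hq : (q : EReal) = φ w := EReal.coe_toReal hwt (hbot w)
      have hqr : q + c * r ^ 2 < a + 1 / ν ^ 2 := by
        rw [hwz, ← hq, ← EReal.coe_add, EReal.coe_lt_coe_iff] at hw
        exact hw
      -- convex combination p = (1 - 1/ν) z + (1/ν) w
      set s : ℝ := 1 / ν with hs_def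
      have hs0 : 0 < s := by positivity
      have hs1 : s ≤ 1 := by
        rw [hs_def]
        exact (div_le_one hν0).2 hν
      have hsν : s * ν = 1 := by rw [hs_def]; field_simp
      set p : Eu m := (1 - s) • z + s • w with hp_def
      have hpconv : φ p ≤ (((1 - s) * a + s * q : ℝ) : EReal) := by
        have := hconv z w (1 - s) s (by linarith) (le_of_lt hs0) (by ring)
        rwa [← ha, ← hq, ← EReal.coe_mul, ← EReal.coe_mul, ← EReal.coe_add] at this
      have hcomb : (1 - s) * a + s * q ≤ a + 1 / ν ^ 2 - c * r ^ 2 / ν := by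
        have h1 : s * q ≤ s * (a + 1 / ν ^ 2 - c * r ^ 2) :=
          mul_le_mul_of_nonneg_left (by linarith) (le_of_lt hs0)
        have h2 : s * (1 / ν ^ 2) ≤ 1 / ν ^ 2 :=
          mul_le_of_le_one_left (by positivity) hs1
        have h3 : s * (c * r ^ 2) = c * r ^ 2 / ν := by
          rw [hs_def]; ring
        nlinarith
      have hφp : φ p ≤ ((a + 1 / ν ^ 2 - c * r ^ 2 / ν : ℝ) : EReal) :=
        le_trans hpconv (EReal.coe_le_coe_iff.2 hcomb)
      -- geometry: p - (z + v) = s • e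
      have hpz : p - z = s • e + v := by
        have h1 : p - z = s • (w - z) := by
          rw [hp_def]
          module
        have h2 : w - z = e + ν • v := by rw [he_def]; abel
        rw [h1, h2, smul_add, smul_smul, hsν, one_smul]
      have hpzv : p - (z + v) = s • e := by
        have h0 : p - (z + v) = (p - z) - v := by abel
        rw [h0, hpz]; abel
      have hnorm_pzv : ‖p - (z + v)‖ = r / ν := by
        rw [hpzv, norm_smul, Real.norm_eq_abs, abs_of_pos hs0, hs_def, hr_def]
        ring
      rcases lt_or_ge (r / ν) δ with hcase | hcase
      · -- near case: use lower semicontinuity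
        have hdist : dist p (z + v) < δ := by
          rw [dist_eq_norm, hnorm_pzv]; exact hcase
        have hbp : (b : EReal) < φ p := hδball hdist
        have hba := lt_of_lt_of_le hbp hφp
        rw [EReal.coe_lt_coe_iff] at hba
        have hnn : (0:ℝ) ≤ c * r ^ 2 / ν := by positivity
        linarith
      · -- far case: contradiction with the lower bound on the ball
        exfalso
        have hrδν : δ * ν ≤ r := by
          rw [le_div_iff₀ hν0] at hcase
          exact hcase
        set D : ℝ := max ‖p - z‖ 1 with hD_def
        have hD1 : 1 ≤ D := le_max_right _ _
        have hD0 : 0 < D := lt_of_lt_of_le one_pos hD1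
        have hDle : ν * D ≤ K * ν + r := by
          have h1 : ‖p - z‖ ≤ ‖v‖ + r / ν := by
            rw [hpz]
            calc ‖s • e + v‖ ≤ ‖s • e‖ + ‖v‖ := norm_add_le _ _
              _ = ‖v‖ + r / ν := by
                  rw [norm_smul, Real.norm_eq_abs, abs_of_pos hs0, hs_def, hr_def]
                  ring
          have hrν : (0:ℝ) ≤ r / ν := by positivity
          have h2 : D ≤ K + r / ν := by
            rw [hD_def]
            refine max_le (le_trans h1 ?_) ?_
            · rw [hK_def]; linarith
            · linarith
          calc ν * D ≤ ν * (K + r / ν) := by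
                exact mul_le_mul_of_nonneg_left h2 hν0.le
            _ = K * ν + r := by field_simp
        set u : ℝ := 1 / D with hu_def
        have hu0 : 0 < u := by positivity
        have hu1 : u ≤ 1 := by
          rw [hu_def]; exact (div_le_one hD0).2 hD1
        set x' : Eu m := (1 - u) • z + u • p with hx'_def
        have hx'conv : φ x' ≤ (((1 - u) * a + u * (a + 1 / ν ^ 2 - c * r ^ 2 / ν) : ℝ) : EReal) := by
          have h1 := hconv z p (1 - u) u (by linarith) (le_of_lt hu0) (by ring)
          rw [← ha] at h1
          refine le_trans h1 ?_
          have h2 : (u : EReal) * φ p ≤ (u : EReal) * ((a + 1 / ν ^ 2 - c * r ^ 2 / ν : ℝ) : EReal) :=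
            mul_le_mul_of_nonneg_left hφp (by exact_mod_cast hu0.le)
          calc ((1 - u : ℝ) : EReal) * ((a : ℝ) : EReal) + (u : EReal) * φ p
              ≤ ((1 - u : ℝ) : EReal) * ((a : ℝ) : EReal) +
                (u : EReal) * ((a + 1 / ν ^ 2 - c * r ^ 2 / ν : ℝ) : EReal) :=
                add_le_add_right h2 _
            _ = (((1 - u) * a + u * (a + 1 / ν ^ 2 - c * r ^ 2 / ν) : ℝ) : EReal) := by
                rw [EReal.coe_add, EReal.coe_mul, EReal.coe_mul]
        have hx'ball : x' ∈ Metric.closedBall z 1 := by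
          rw [Metric.mem_closedBall, dist_eq_norm]
          have h1 : x' - z = u • (p - z) := by
            rw [hx'_def]; module
          rw [h1, norm_smul, Real.norm_eq_abs, abs_of_pos hu0, hu_def]
          rw [div_mul_eq_mul_div, one_mul, div_le_one hD0]
          exact le_max_left _ _
        have hMx' := lt_of_lt_of_le (hM x' hx'ball) hx'conv
        rw [EReal.coe_lt_coe_iff] at hMx'
        -- now derive the numeric contradiction
        have hquad : C * ν ≤ u * (c * r ^ 2 / ν) := by
          have hKδ : (0:ℝ) < K + δ := by linarith
          have hνD : (0:ℝ) < ν * D := by positivity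
          have hu' : u * (c * r ^ 2 / ν) = c * r ^ 2 / (ν * D) := by
            rw [hu_def]; ring
          rw [hu', hC_def, div_mul_eq_mul_div, div_le_div_iff₀ hKδ hνD]
          have h2 : δ ^ 2 * ν * (K * ν + r) ≤ r ^ 2 * (K + δ) := by
            nlinarith [mul_nonneg (mul_nonneg hδ.le hr0) (sub_nonneg.2 hrδν),
              mul_nonneg (mul_nonneg (lt_of_lt_of_le one_pos hK).le (sub_nonneg.2 hrδν))
                (by positivity : (0:ℝ) ≤ r + δ * ν)]
          calc c * δ ^ 2 * ν * (ν * D) ≤ c * δ ^ 2 * ν * (K * ν + r) := by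
                have hpos : (0:ℝ) ≤ c * δ ^ 2 * ν := by positivity
                exact mul_le_mul_of_nonneg_left hDle hpos
            _ = c * (δ ^ 2 * ν * (K * ν + r)) := by ring
            _ ≤ c * (r ^ 2 * (K + δ)) := mul_le_mul_of_nonneg_left h2 hc.le
            _ = c * r ^ 2 * (K + δ) := by ring
        have hν2 : 1 / ν ^ 2 ≤ 1 := by
          rw [div_le_one (by positivity)]
          nlinarith
        have hsmall : u * (1 / ν ^ 2) ≤ 1 := by
          nlinarith [mul_nonneg (sub_nonneg.2 hu1) (by positivity : (0:ℝ) ≤ 1 / ν ^ 2)]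
        have hexpand : (1 - u) * a + u * (a + 1 / ν ^ 2 - c * r ^ 2 / ν)
            = a + u * (1 / ν ^ 2) - u * (c * r ^ 2 / ν) := by ring
        rw [hexpand] at hMx'
        linarith
    -- conclude: choose n large
    by_contra hba
    push_neg at hba
    obtain ⟨n, hn⟩ := exists_nat_gt (max 1 (max ((a + 1 - M) / C) (1 / (b - a))))
    have hn1 : (1 : ℝ) < n := lt_of_le_of_lt (le_max_left _ _) hn
    have hnn : 1 ≤ n := by exact_mod_cast hn1.le
    have h2 : (a + 1 - M) / C < n := lt_of_le_of_lt ((le_max_left _ _).trans (le_max_right _ _)) hn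
    have h3 : (1 : ℝ) / (b - a) < n := lt_of_le_of_lt ((le_max_right _ _).trans (le_max_right _ _)) hn
    have hMn : a + 1 - C * n ≤ M := by
      rw [div_lt_iff₀ hC] at h2
      linarith
    have hkey := key n hnn hMn
    have hba' : 0 < b - a := by linarith
    have h4 : 1 / (n : ℝ) < b - a := by
      rw [div_lt_iff₀ (by linarith : (0:ℝ) < (n:ℝ))]
      rw [div_lt_iff₀ hba'] at h3
      linarith [h3]
    have h5 : 1 / (n : ℝ) ^ 2 ≤ 1 / (n : ℝ) := by
      apply div_le_div_of_nonneg_left one_pos.le (by linarith)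
      nlinarith
    linarith
  · -- easy direction: v ∈ hzn φ → v ∈ hzn (menv φ γ)
    intro hv z _
    refine le_iInf fun u => ?_
    by_cases hu : φ u = ⊤
    · rw [hu, EReal.top_add_coe]
      exact le_top
    · refine iInf_le_of_le (u + v) ?_
      have hnorm : u + v - (z + v) = u - z := by abel
      rw [hnorm]
      exact add_le_add_left (hv u hu) _
end
end

section
/- Consider the problem of minimizing Φ(x) = f(x) + g(c(x)) over x ∈ ℝ^n, where f is continuously differentiable and convex, g is proper, lsc, convex, and c is continuously differentiable and (-hzn g)-convex. Then the composition g ∘ c is convex; in particular Φ is convex. -/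
open scoped RealInnerProductSpace

noncomputable section

/-- `c` is `(-hzn g)`-convex. -/
def HznConvex {n m : ℕ} (g : Eu m → EReal) (c : Eu n → Eu m) : Prop :=
  ∀ x xp : Eu n, ∀ l : ℝ, 0 ≤ l → l ≤ 1 →
    c (l • x + (1 - l) • xp) - l • c x - (1 - l) • c xp ∈ hzn g

lemma mul_coe_add (a r : ℝ) (ha : 0 ≤ a) (q : EReal) (hq : q ≠ ⊥) :
    (a : EReal) * ((r : EReal) + q) = (a : EReal) * r + (a : EReal) * q := by
  induction q with
  | bot => exact absurd rfl hq
  | coe q => rw [← EReal.coe_add, ← EReal.coe_mul, ← EReal.coe_mul, ← EReal.coe_mul,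
      ← EReal.coe_add, mul_add]
  | top =>
      rcases eq_or_lt_of_le ha with h | h
      · simp [← h]
      · rw [EReal.coe_add_top, EReal.mul_top_of_pos (by exact_mod_cast h),
          ← EReal.coe_mul, EReal.coe_add_top]

/-- Under the full convexity assumptions, `g ∘ c` is convex; in particular
`Φ = f + g ∘ c` is convex. -/
theorem comp_convex {n m : ℕ} (f : Eu n → ℝ) (g : Eu m → EReal) (c : Eu n → Eu m)
    (hf : ContDiff ℝ 1 f) (hfc : ConvexOn ℝ Set.univ f)
    (hgp : EProper g) (hglsc : LowerSemicontinuous g) (hgc : EConvexOn g)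
    (hc : ContDiff ℝ 1 c) (hcK : HznConvex g c) :
    EConvexOn (fun x => g (c x)) ∧
      EConvexOn (fun x => ((f x : ℝ) : EReal) + g (c x)) := by
  have h1 : EConvexOn (fun x => g (c x)) := by
    intro x y a b ha hb hab
    have hb' : b = 1 - a := by linarith
    subst hb'
    have hv := hcK x y a ha (by linarith)
    have hconv := hgc (c x) (c y) a (1 - a) ha (by linarith) (by ring)
    by_cases hd : a • c x + (1 - a) • c y ∈ edom g
    · have hz := hv _ hd
      have heq : a • c x + (1 - a) • c y +
          (c (a • x + (1 - a) • y) - a • c x - (1 - a) • c y) = c (a • x + (1 - a) • y) := by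
        abel
      rw [heq] at hz
      exact le_trans hz hconv
    · have : g (a • c x + (1 - a) • c y) = ⊤ := by
        simpa [edom] using hd
      rw [this] at hconv
      exact le_trans le_top hconv
  refine ⟨h1, ?_⟩
  intro x y a b ha hb hab
  have hfle : (f (a • x + b • y) : EReal) ≤ (a : EReal) * f x + (b : EReal) * f y := by
    have := hfc.2 (Set.mem_univ x) (Set.mem_univ y) ha hb hab
    rw [← EReal.coe_mul, ← EReal.coe_mul, ← EReal.coe_add]
    exact_mod_cast this
  have hgle := h1 x y a b ha hb hab
  have key : ((f (a • x + b • y) : ℝ) : EReal) + g (c (a • x + b • y)) ≤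
      ((a : EReal) * f x + (b : EReal) * f y) + ((a : EReal) * g (c x) + (b : EReal) * g (c y)) :=
    add_le_add hfle hgle
  refine le_trans key (le_of_eq ?_)
  rw [mul_coe_add a (f x) ha _ (hgp.2 (c x)), mul_coe_add b (f y) hb _ (hgp.2 (c y))]
  abel
end
end

section
/- Let ψ : ℝ^m → ℝ ∪ {+∞} be proper, lsc, convex and bounded below, let Y ⊆ ℝ^m be nonempty, closed, convex, and let μ > 0. Then ȳ ∈ ℝ^m is a fixed point of prox_{(1/μ)ψ} ∘ Π_Y if and only if ȳ is a minimizer of the function y ↦ ψ(y) + (μ/2) dist_Y(y)², where Π_Y is the projection onto Y and dist_Y the distance to Y. -/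
open scoped RealInnerProductSpace

noncomputable section

/-- Variational inequality for the projection. -/
lemma proj_inner_le {m : ℕ} {Y : Set (Eu m)} (hYconv : Convex ℝ Y)
    {yb p q : Eu m} (hpY : p ∈ Y) (hqY : q ∈ Y)
    (hmin : ∀ z ∈ Y, ‖yb - p‖ ≤ ‖yb - z‖) :
    ⟪yb - p, q - p⟫ ≤ 0 := by
  have key : ∀ t : ℝ, 0 < t → t ≤ 1 → ⟪yb - p, q - p⟫ ≤ t / 2 * ‖q - p‖ ^ 2 := by
    intro t ht ht1
    have hz : p + t • (q - p) ∈ Y := by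
      have := hYconv hpY hqY (a := 1 - t) (b := t) (by linarith) ht.le (by ring)
      convert this using 1
      module
    have h1 : ‖yb - p‖ ≤ ‖yb - (p + t • (q - p))‖ := hmin _ hz
    have h2 : ‖yb - p‖ ^ 2 ≤ ‖yb - (p + t • (q - p))‖ ^ 2 :=
      pow_le_pow_left₀ (norm_nonneg _) h1 2
    have hexp : ‖yb - (p + t • (q - p))‖ ^ 2
        = ‖yb - p‖ ^ 2 - 2 * t * ⟪yb - p, q - p⟫ + t ^ 2 * ‖q - p‖ ^ 2 := by
      have : yb - (p + t • (q - p)) = (yb - p) - t • (q - p) := by module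
      rw [this, norm_sub_sq_real, real_inner_smul_right, norm_smul]
      simp [abs_of_pos ht]
      ring
    rw [hexp] at h2
    have := mul_pos ht ht
    nlinarith
  by_contra h
  push_neg at h
  set c := ⟪yb - p, q - p⟫ with hc
  have hB : 0 ≤ ‖q - p‖ ^ 2 := by positivity
  rcases le_or_gt (‖q - p‖ ^ 2) 0 with hB0 | hB0
  · have := key 1 one_pos le_rfl
    nlinarith
  · have ht : 0 < c / ‖q - p‖ ^ 2 := div_pos h hB0
    set t := min 1 (c / ‖q - p‖ ^ 2) with htdef
    have ht0 : 0 < t := lt_min one_pos ht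
    have := key t ht0 (min_le_left _ _)
    have h2 : t / 2 * ‖q - p‖ ^ 2 < c := by
      have h3 : t ≤ c / ‖q - p‖ ^ 2 := min_le_right _ _
      have : t * ‖q - p‖ ^ 2 ≤ c := by
        calc t * ‖q - p‖ ^ 2 ≤ (c / ‖q - p‖ ^ 2) * ‖q - p‖ ^ 2 :=
              mul_le_mul_of_nonneg_right h3 hB
          _ = c := div_mul_cancel₀ _ (ne_of_gt hB0)
      nlinarith
    linarith

/-- Gradient inequality for the squared distance at the projection point. -/
lemma dist_sq_grad_ineq {m : ℕ} {Y : Set (Eu m)} (hYconv : Convex ℝ Y)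
    (hYcl : IsClosed Y) (hYne : Y.Nonempty)
    {yb p : Eu m} (hpY : p ∈ Y) (hmin : ∀ z ∈ Y, ‖yb - p‖ ≤ ‖yb - z‖) (w : Eu m) :
    ‖yb - p‖ ^ 2 + 2 * ⟪yb - p, w - yb⟫ ≤ (Metric.infDist w Y) ^ 2 := by
  obtain ⟨q, hqY, hq⟩ := hYcl.exists_infDist_eq_dist hYne w
  have hdq : Metric.infDist w Y = ‖w - q‖ := by rw [hq, dist_eq_norm]
  have hvar : ⟪yb - p, q - p⟫ ≤ 0 := proj_inner_le hYconv hpY hqY hmin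
  have hdecomp : ⟪yb - p, w - yb⟫
      = ⟪yb - p, w - q⟫ + ⟪yb - p, q - p⟫ - ‖yb - p‖ ^ 2 := by
    have h1 : (w : Eu m) - yb = (w - q) + (q - p) - (yb - p) := by module
    rw [h1, inner_sub_right, inner_add_right, real_inner_self_eq_norm_sq]
  have hcs : ⟪yb - p, w - q⟫ ≤ ‖yb - p‖ * ‖w - q‖ := real_inner_le_norm _ _
  rw [hdq]
  nlinarith [sq_nonneg (‖yb - p‖ - ‖w - q‖)]

/-- `yb` is a fixed point of `prox_{(1/μ)ψ} ∘ Π_Y` iff `yb` minimizes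
`y ↦ ψ(y) + (μ/2) dist_Y(y)²`. -/
theorem fixed_point_iff_min_penalized {m : ℕ} (ψ : Eu m → EReal)
    (hp : EProper ψ) (hlsc : LowerSemicontinuous ψ) (hconv : EConvexOn ψ)
    (hbdd : ∃ b : ℝ, ∀ y, (b : EReal) ≤ ψ y)
    (Y : Set (Eu m)) (hYne : Y.Nonempty) (hYcl : IsClosed Y) (hYconv : Convex ℝ Y)
    (μ : ℝ) (hμ : 0 < μ) (yb : Eu m) :
    (∀ p : Eu m, (p ∈ Y ∧ ∀ q ∈ Y, ‖yb - p‖ ≤ ‖yb - q‖) →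
        ∀ w, ψ yb + ((μ / 2 * ‖yb - p‖ ^ 2 : ℝ) : EReal) ≤
          ψ w + ((μ / 2 * ‖w - p‖ ^ 2 : ℝ) : EReal)) ↔
      (∀ w, ψ yb + ((μ / 2 * (Metric.infDist yb Y) ^ 2 : ℝ) : EReal) ≤
        ψ w + ((μ / 2 * (Metric.infDist w Y) ^ 2 : ℝ) : EReal)) := by
  obtain ⟨p₀, hp₀Y, hp₀d⟩ := hYcl.exists_infDist_eq_dist hYne yb
  have hd0 : Metric.infDist yb Y = ‖yb - p₀‖ := by rw [hp₀d, dist_eq_norm]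
  have hp₀min : ∀ q ∈ Y, ‖yb - p₀‖ ≤ ‖yb - q‖ := by
    intro q hq
    rw [← hd0, ← dist_eq_norm]
    exact Metric.infDist_le_dist_of_mem hq
  constructor
  · intro H w
    have Hp := H p₀ ⟨hp₀Y, hp₀min⟩
    obtain ⟨x₀, hx₀⟩ := hp.1
    -- ψ yb is finite
    have hψyb_ne_top : ψ yb ≠ ⊤ := by
      intro htop
      have h1 := Hp x₀
      rw [htop] at h1
      have h2 : (⊤ : EReal) + ((μ / 2 * ‖yb - p₀‖ ^ 2 : ℝ) : EReal) = ⊤ :=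
        EReal.top_add_of_ne_bot (EReal.coe_ne_bot _)
      rw [h2, top_le_iff] at h1
      exact (EReal.add_lt_top hx₀ (EReal.coe_ne_top _)).ne h1
    have hψyb_ne_bot := hp.2 yb
    set a := (ψ yb).toReal with ha
    have hyb : ψ yb = (a : EReal) := (EReal.coe_toReal hψyb_ne_top hψyb_ne_bot).symm
    by_cases hwtop : ψ w = ⊤
    · rw [hwtop, EReal.top_add_of_ne_bot (EReal.coe_ne_bot _)]
      exact le_top
    set c := (ψ w).toReal with hc
    have hw : ψ w = (c : EReal) := (EReal.coe_toReal hwtop (hp.2 w)).symm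
    set inn := ⟪yb - p₀, w - yb⟫ with hinn
    set B := ‖w - yb‖ ^ 2 with hB
    have hBnn : (0:ℝ) ≤ B := by positivity
    -- key inequality from convexity and the prox property
    have key : a ≤ c + μ * inn := by
      apply le_of_forall_pos_le_add
      intro ε hε
      set D := μ / 2 * B with hD
      have hDnn : 0 ≤ D := by positivity
      set t := min 1 (ε / (D + 1)) with ht
      have ht0 : 0 < t := lt_min one_pos (div_pos hε (by linarith))
      have ht1 : t ≤ 1 := min_le_left _ _
      have hDtε : D * t ≤ ε := by
        have h3 : t ≤ ε / (D + 1) := min_le_right _ _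
        have h4 : t * (D + 1) ≤ ε := by
          rw [← le_div_iff₀ (by linarith)]; exact h3
        nlinarith
      set wt := yb + t • (w - yb) with hwt
      have hwteq : (1 - t) • yb + t • w = wt := by rw [hwt]; module
      have hconvt := hconv yb w (1 - t) t (by linarith) ht0.le (by ring)
      rw [hwteq, hyb, hw] at hconvt
      have hconvt' : ψ wt ≤ (((1 - t) * a + t * c : ℝ) : EReal) := by
        rw [EReal.coe_add, EReal.coe_mul, EReal.coe_mul]
        exact hconvt
      have hchain : (a : EReal) + ((μ / 2 * ‖yb - p₀‖ ^ 2 : ℝ) : EReal) ≤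
          (((1 - t) * a + t * c : ℝ) : EReal) + ((μ / 2 * ‖wt - p₀‖ ^ 2 : ℝ) : EReal) := by
        calc (a : EReal) + ((μ / 2 * ‖yb - p₀‖ ^ 2 : ℝ) : EReal)
            = ψ yb + ((μ / 2 * ‖yb - p₀‖ ^ 2 : ℝ) : EReal) := by rw [hyb]
          _ ≤ ψ wt + ((μ / 2 * ‖wt - p₀‖ ^ 2 : ℝ) : EReal) := Hp wt
          _ ≤ (((1 - t) * a + t * c : ℝ) : EReal) + ((μ / 2 * ‖wt - p₀‖ ^ 2 : ℝ) : EReal) :=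
              add_le_add_left hconvt' _
      have hreal : a + μ / 2 * ‖yb - p₀‖ ^ 2 ≤
          (1 - t) * a + t * c + μ / 2 * ‖wt - p₀‖ ^ 2 := by
        rw [← EReal.coe_le_coe_iff]
        push_cast
        exact hchain
      have hexp : ‖wt - p₀‖ ^ 2 = ‖yb - p₀‖ ^ 2 + 2 * t * inn + t ^ 2 * B := by
        have h5 : wt - p₀ = (yb - p₀) + t • (w - yb) := by rw [hwt]; module
        rw [h5, norm_add_sq_real, real_inner_smul_right, norm_smul]
        simp [abs_of_pos ht0, hinn, hB]
        ring
      rw [hexp] at hreal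
      have hdiv : t * a ≤ t * (c + μ * inn + μ / 2 * t * B) := by nlinarith
      have h6 : a ≤ c + μ * inn + μ / 2 * t * B := (mul_le_mul_iff_right₀ ht0).mp hdiv
      have h7 : μ / 2 * t * B = D * t := by rw [hD]; ring
      linarith [hDtε, h6, h7 ▸ le_refl (μ / 2 * t * B)]
    -- geometric inequality
    have geom := dist_sq_grad_ineq hYconv hYcl hYne hp₀Y hp₀min w
    rw [← hinn] at geom
    -- combine
    rw [hyb, hw, hd0]
    have hfin : a + μ / 2 * ‖yb - p₀‖ ^ 2 ≤ c + μ / 2 * (Metric.infDist w Y) ^ 2 := by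
      nlinarith
    exact_mod_cast EReal.coe_le_coe_iff.mpr hfin
  · rintro Hmin p ⟨hpY, hpm⟩ w
    have hdp : ‖yb - p‖ = Metric.infDist yb Y := by
      refine le_antisymm ?_ ?_
      · rw [hd0]; exact hpm p₀ hp₀Y
      · rw [← dist_eq_norm]; exact Metric.infDist_le_dist_of_mem hpY
    rw [hdp]
    refine le_trans (Hmin w) (add_le_add_right ?_ _)
    rw [EReal.coe_le_coe_iff]
    have h1 : Metric.infDist w Y ≤ ‖w - p‖ := by
      rw [← dist_eq_norm]; exact Metric.infDist_le_dist_of_mem hpY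
    have h2 : 0 ≤ Metric.infDist w Y := Metric.infDist_nonneg
    nlinarith [mul_le_mul h1 h1 h2 (norm_nonneg (w - p))]
end
end
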